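/- For every f ∈ 𝓛 there exists g ∈ 𝓜₁⁺ such that f(x) = 0 for almost every x with g(x) = 0 and ‖f‖_𝓛 = ‖h‖_{L²(ℝⁿ)}, where h(x) = f(x)/g(x) if g(x) ≠ 0 and h(x) = 0 otherwise (so that f = g·h almost everywhere). -/

import Mathlib

/-!
On the cube `K_a` put `g = |f| ^ r / (λ_a ‖χ_a f‖_p ^ r)` with `r = p / q = 1 - p / 2`.
Since `r q = p`, `λ_a ‖χ_a g‖_q` is `1` (or `0` when `χ_a f = 0`). Since
`|f / g| = λ_a ‖χ_a f‖_p ^ r |f| ^ (p / 2)` on `K_a` and `r + p / 2 = 1`, we get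
`‖χ_a (f / g)‖_2 = λ_a ‖χ_a f‖_p`, and summing the squares over the cubes gives
`‖f / g‖_2 = ‖f‖_𝓛`.
-/

open MeasureTheory
open scoped ENNReal

noncomputable section

/-- The unit cube `K_a = a + (−1/2, 1/2]ⁿ` centered at `a ∈ ℤⁿ`. -/
def cube {n : ℕ} (a : Fin n → ℤ) : Set (Fin n → ℝ) :=
  {x | ∀ i, (a i : ℝ) - 1 / 2 < x i ∧ x i ≤ (a i : ℝ) + 1 / 2}

/-- `‖χ_a f‖_{L^p}` : the `L^p` norm of `f` restricted to the cube `K_a`. -/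
def pieceNorm {n : ℕ} {F : Type*} [NormedAddCommGroup F] (p : ℝ)
    (f : (Fin n → ℝ) → F) (a : Fin n → ℤ) : ℝ≥0∞ :=
  eLpNorm ((cube a).indicator f) (ENNReal.ofReal p) volume

/-- `f` belongs to the space `𝓛 = ℓ²_λ(L^p)`. -/
def MemL {n : ℕ} {F : Type*} [NormedAddCommGroup F] (p : ℝ) (lam : (Fin n → ℤ) → ℝ)
    (f : (Fin n → ℝ) → F) : Prop :=
  AEStronglyMeasurable f volume ∧ (∀ a, pieceNorm p f a < ∞) ∧
    Summable fun a => lam a ^ 2 * (pieceNorm p f a).toReal ^ 2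

/-- The square `‖f‖_𝓛²` of the norm of `𝓛 = ℓ²_λ(L^p)`. -/
def LnormSq {n : ℕ} {F : Type*} [NormedAddCommGroup F] (p : ℝ) (lam : (Fin n → ℤ) → ℝ)
    (f : (Fin n → ℝ) → F) : ℝ :=
  ∑' a, lam a ^ 2 * (pieceNorm p f a).toReal ^ 2

section Cubes

variable {n : ℕ}

def cubeIndex (x : Fin n → ℝ) : Fin n → ℤ := fun i => ⌈x i - 1 / 2⌉

lemma mem_cube_iff_cubeIndex_eq {a : Fin n → ℤ} {x : Fin n → ℝ} :
    x ∈ cube a ↔ cubeIndex x = a := by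
  simp only [cube, Set.mem_ofPred_eq, cubeIndex, funext_iff, Int.ceil_eq_iff]
  refine forall_congr' fun i => ?_
  constructor <;> rintro ⟨h₁, h₂⟩ <;> constructor <;> linarith

lemma mem_cube_cubeIndex (x : Fin n → ℝ) : x ∈ cube (cubeIndex x) :=
  mem_cube_iff_cubeIndex_eq.2 rfl

lemma measurable_cubeIndex : Measurable (cubeIndex (n := n)) :=
  measurable_pi_lambda _ fun i => Int.measurable_ceil.comp ((measurable_pi_apply i).sub_const _)

lemma measurableSet_cube (a : Fin n → ℤ) : MeasurableSet (cube a) :=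
  measurable_cubeIndex (measurableSet_singleton a) |>.congr <| by
    ext x; exact mem_cube_iff_cubeIndex_eq.symm

lemma pairwise_disjoint_cube : Pairwise (Function.onFun Disjoint (cube (n := n))) :=
  fun _ _ hab => Set.disjoint_left.2 fun _ hxa hxb =>
    hab <| (mem_cube_iff_cubeIndex_eq.1 hxa).symm.trans (mem_cube_iff_cubeIndex_eq.1 hxb)

lemma iUnion_cube : ⋃ a, cube (n := n) a = Set.univ :=
  Set.eq_univ_of_forall fun x => Set.mem_iUnion.2 ⟨_, mem_cube_cubeIndex x⟩

lemma lintegral_eq_tsum_setLIntegral_cube (F : (Fin n → ℝ) → ℝ≥0∞) :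
    ∫⁻ x, F x = ∑' a, ∫⁻ x in cube a, F x := by
  rw [← setLIntegral_univ, ← iUnion_cube,
    lintegral_iUnion measurableSet_cube pairwise_disjoint_cube]

end Cubes

section PieceNorm

variable {n : ℕ} {E F : Type*} [NormedAddCommGroup E] [NormedAddCommGroup F]

lemma pieceNorm_congr_norm {f : (Fin n → ℝ) → E} {g : (Fin n → ℝ) → F} {p : ℝ} {a : Fin n → ℤ}
    (h : ∀ᵐ x, x ∈ cube a → ‖f x‖ = ‖g x‖) : pieceNorm p f a = pieceNorm p g a := by
  refine eLpNorm_congr_norm_ae ?_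
  filter_upwards [h] with x hx
  by_cases hxa : x ∈ cube a <;> simp [hxa, hx]

lemma pieceNorm_congr_ae {f g : (Fin n → ℝ) → E} (h : f =ᵐ[volume] g) (p : ℝ) (a : Fin n → ℤ) :
    pieceNorm p f a = pieceNorm p g a :=
  pieceNorm_congr_norm <| by filter_upwards [h] with x hx _ using hx ▸ rfl

lemma MemL.ae_eq {p : ℝ} {lam : (Fin n → ℤ) → ℝ} {f g : (Fin n → ℝ) → E} (hf : MemL p lam f)
    (h : f =ᵐ[volume] g) : MemL p lam g := by
  obtain ⟨hf_meas, hf_fin, hf_sum⟩ := hf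
  simp only [pieceNorm_congr_ae h] at hf_fin hf_sum
  exact ⟨hf_meas.congr h, hf_fin, hf_sum⟩

lemma LnormSq_congr_ae {p : ℝ} {lam : (Fin n → ℤ) → ℝ} {f g : (Fin n → ℝ) → E}
    (h : f =ᵐ[volume] g) : LnormSq p lam f = LnormSq p lam g := by
  simp only [LnormSq, pieceNorm_congr_ae h]

lemma ae_eq_zero_on_cube_of_pieceNorm_eq_zero {f : (Fin n → ℝ) → E} {p : ℝ} {a : Fin n → ℤ}
    (hf : AEStronglyMeasurable f volume) (hp : 0 < p) (h : pieceNorm p f a = 0) :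
    ∀ᵐ x, x ∈ cube a → f x = 0 := by
  have := (eLpNorm_eq_zero_iff (hf.indicator (measurableSet_cube a)) (by simpa using hp)).1 h
  filter_upwards [this] with x hx hxa
  simpa [hxa] using hx

lemma eLpNorm_rpow_eq_tsum_pieceNorm_rpow (f : (Fin n → ℝ) → E) {p : ℝ} (hp : 0 < p) :
    eLpNorm f (ENNReal.ofReal p) volume ^ p = ∑' a, pieceNorm p f a ^ p := by
  simp only [pieceNorm, eLpNorm_indicator_eq_eLpNorm_restrict (measurableSet_cube _),
    eLpNorm_eq_eLpNorm' (ENNReal.ofReal_pos.2 hp).ne' ENNReal.ofReal_ne_top,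
    ENNReal.toReal_ofReal hp.le, ← lintegral_rpow_enorm_eq_rpow_eLpNorm' hp]
  exact lintegral_eq_tsum_setLIntegral_cube _

lemma pieceNorm_const_mul_norm_rpow (f : (Fin n → ℝ) → E) {c q r : ℝ} (hc : 0 ≤ c) (hq : 0 ≤ q)
    (hr : 0 < r) (a : Fin n → ℤ) :
    pieceNorm q (fun x => c * ‖f x‖ ^ r) a = ENNReal.ofReal c * pieceNorm (q * r) f a ^ r := by
  have hind : (cube a).indicator (fun x => c * ‖f x‖ ^ r)
      = c • fun x => ‖(cube a).indicator f x‖ ^ r := by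
    ext x
    by_cases hxa : x ∈ cube a <;> simp [hxa, Real.zero_rpow hr.ne']
  rw [pieceNorm, hind, eLpNorm_const_smul, eLpNorm_norm_rpow _ hr, pieceNorm,
    ENNReal.ofReal_mul hq, Real.enorm_of_nonneg hc]

end PieceNorm

lemma norm_div_ofReal_mul_norm_rpow (z : ℂ) {c r : ℝ} (hc : 0 ≤ c) (hr : r ≠ 1) :
    ‖z / ((c * ‖z‖ ^ r : ℝ) : ℂ)‖ = c⁻¹ * ‖z‖ ^ (1 - r) := by
  rcases eq_or_ne z 0 with rfl | hz
  · simp [Real.zero_rpow (sub_ne_zero.2 hr.symm)]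
  have hz' := norm_pos_iff.2 hz
  rw [norm_div, Complex.norm_real, Real.norm_of_nonneg (by positivity), Real.rpow_sub hz',
    Real.rpow_one, mul_comm c, ← div_div, div_eq_inv_mul]

section Factor

variable {n : ℕ} {E : Type*} [NormedAddCommGroup E] {p r : ℝ} {lam : (Fin n → ℤ) → ℝ}
  {f : (Fin n → ℝ) → E}

/-- Vanishes on the cubes where `f` does, through `0⁻¹ = 0`. -/
def cubeWeight (p r : ℝ) (lam : (Fin n → ℤ) → ℝ) (f : (Fin n → ℝ) → E) (a : Fin n → ℤ) : ℝ :=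
  (lam a * (pieceNorm p f a).toReal ^ r)⁻¹

/-- The factor `g ∈ 𝓜₁⁺` in `f = g h`. -/
def mFactor (p r : ℝ) (lam : (Fin n → ℤ) → ℝ) (f : (Fin n → ℝ) → E) (x : Fin n → ℝ) : ℝ :=
  cubeWeight p r lam f (cubeIndex x) * ‖f x‖ ^ r

lemma cubeWeight_nonneg (hlam : ∀ a, 0 ≤ lam a) (a : Fin n → ℤ) : 0 ≤ cubeWeight p r lam f a :=
  inv_nonneg.2 <| mul_nonneg (hlam a) (Real.rpow_nonneg ENNReal.toReal_nonneg r)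

lemma mFactor_nonneg (hlam : ∀ a, 0 ≤ lam a) (x : Fin n → ℝ) : 0 ≤ mFactor p r lam f x :=
  mul_nonneg (cubeWeight_nonneg hlam _) (Real.rpow_nonneg (norm_nonneg _) r)

lemma measurable_mFactor (hf : StronglyMeasurable f) : Measurable (mFactor p r lam f) :=
  ((measurable_of_countable (cubeWeight p r lam f)).comp measurable_cubeIndex).mul
    (hf.norm.measurable.pow_const r)

lemma mFactor_of_mem_cube {a : Fin n → ℤ} {x : Fin n → ℝ} (hx : x ∈ cube a) :
    mFactor p r lam f x = cubeWeight p r lam f a * ‖f x‖ ^ r := by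
  rw [mFactor, mem_cube_iff_cubeIndex_eq.1 hx]

lemma pieceNorm_mFactor (hlam : ∀ a, 0 ≤ lam a) {q : ℝ} (hq : 0 ≤ q) (hr : 0 < r)
    (hqr : q * r = p) (a : Fin n → ℤ) :
    pieceNorm q (mFactor p r lam f) a
      = ENNReal.ofReal (cubeWeight p r lam f a) * pieceNorm p f a ^ r := by
  rw [pieceNorm_congr_norm (g := fun x => cubeWeight p r lam f a * ‖f x‖ ^ r)
      (ae_of_all _ fun x hx => by rw [mFactor_of_mem_cube hx]),
    pieceNorm_const_mul_norm_rpow _ (cubeWeight_nonneg hlam a) hq hr, hqr]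

lemma ofReal_mul_pieceNorm_mFactor_le_one (hlam : ∀ a, 0 ≤ lam a) {q : ℝ} (hq : 0 ≤ q)
    (hr : 0 < r) (hqr : q * r = p) {a : Fin n → ℤ} (hfin : pieceNorm p f a ≠ ∞) :
    ENNReal.ofReal (lam a) * pieceNorm q (mFactor p r lam f) a ≤ 1 := by
  set t := (pieceNorm p f a).toReal
  have ht : pieceNorm p f a ^ r = ENNReal.ofReal (t ^ r) := by
    rw [← ENNReal.ofReal_rpow_of_nonneg ENNReal.toReal_nonneg hr.le, ENNReal.ofReal_toReal hfin]
  rw [pieceNorm_mFactor hlam hq hr hqr, ht, ← ENNReal.ofReal_mul (cubeWeight_nonneg hlam a),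
    ← ENNReal.ofReal_mul (hlam a), ← ENNReal.ofReal_one, cubeWeight, ← mul_assoc, mul_right_comm]
  exact ENNReal.ofReal_le_ofReal mul_inv_le_one

lemma ae_eq_zero_of_mFactor_eq_zero (hf : AEStronglyMeasurable f volume) (hp : 0 < p)
    (hlam : ∀ a, lam a ≠ 0) (hfin : ∀ a, pieceNorm p f a ≠ ∞) :
    ∀ᵐ x, mFactor p r lam f x = 0 → f x = 0 := by
  have hcube : ∀ a, ∀ᵐ x, x ∈ cube a → mFactor p r lam f x = 0 → f x = 0 := by
    intro a
    by_cases hN : pieceNorm p f a = 0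
    · filter_upwards [ae_eq_zero_on_cube_of_pieceNorm_eq_zero hf hp hN] with x hx hxa _
        using hx hxa
    have hw : cubeWeight p r lam f a ≠ 0 := inv_ne_zero <| mul_ne_zero (hlam a)
      (Real.rpow_pos_of_pos (ENNReal.toReal_pos hN (hfin a)) r).ne'
    refine ae_of_all _ fun x hxa h0 => ?_
    rw [mFactor_of_mem_cube hxa, mul_eq_zero, or_iff_right hw,
      Real.rpow_eq_zero_iff_of_nonneg (norm_nonneg _)] at h0
    exact norm_eq_zero.1 h0.1
  filter_upwards [ae_all_iff.2 hcube] with x hx using hx _ (mem_cube_cubeIndex x)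

end Factor

section Quotient

variable {n : ℕ} {p r : ℝ} {lam : (Fin n → ℤ) → ℝ} {f : (Fin n → ℝ) → ℂ}

lemma pieceNorm_div_mFactor (hlam : ∀ a, 0 ≤ lam a) (hr0 : 0 ≤ r) (hr1 : r < 1)
    (hp : 2 * (1 - r) = p) {a : Fin n → ℤ} (hfin : pieceNorm p f a ≠ ∞) :
    pieceNorm 2 (fun x => f x / mFactor p r lam f x) a
      = ENNReal.ofReal (lam a) * pieceNorm p f a := by
  have hw := cubeWeight_nonneg (p := p) (r := r) (f := f) hlam a
  rw [pieceNorm_congr_norm (g := fun x => (cubeWeight p r lam f a)⁻¹ * ‖f x‖ ^ (1 - r))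
      (ae_of_all _ fun x hx => by
        rw [mFactor_of_mem_cube hx, norm_div_ofReal_mul_norm_rpow _ hw hr1.ne,
          Real.norm_of_nonneg (by positivity)]),
    pieceNorm_const_mul_norm_rpow _ (inv_nonneg.2 hw) zero_le_two (sub_pos.2 hr1), hp,
    cubeWeight, inv_inv, ENNReal.ofReal_mul (hlam a),
    ← ENNReal.ofReal_rpow_of_nonneg ENNReal.toReal_nonneg hr0, ENNReal.ofReal_toReal hfin,
    mul_assoc, ← ENNReal.rpow_add_of_nonneg _ _ hr0 (sub_pos.2 hr1).le, add_sub_cancel,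
    ENNReal.rpow_one]

lemma eLpNorm_div_mFactor (hf : MemL p lam f) (hlam : ∀ a, 0 ≤ lam a) (hr0 : 0 ≤ r)
    (hr1 : r < 1) (hp : 2 * (1 - r) = p) :
    eLpNorm (fun x => f x / mFactor p r lam f x) 2 volume
      = ENNReal.ofReal √(LnormSq p lam f) := by
  obtain ⟨-, hfin, hsum⟩ := hf
  have hsq : eLpNorm (fun x => f x / mFactor p r lam f x) 2 volume ^ (2 : ℝ)
      = ENNReal.ofReal (LnormSq p lam f) := by
    rw [show (2 : ℝ≥0∞) = ENNReal.ofReal 2 by norm_num,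
      eLpNorm_rpow_eq_tsum_pieceNorm_rpow _ two_pos, LnormSq,
      ENNReal.ofReal_tsum_of_nonneg (fun a => mul_nonneg (sq_nonneg _) (sq_nonneg _)) hsum]
    refine tsum_congr fun a => ?_
    rw [pieceNorm_div_mFactor hlam hr0 hr1 hp (hfin a).ne, ← ENNReal.ofReal_toReal (hfin a).ne,
      ← ENNReal.ofReal_mul (hlam a),
      ENNReal.ofReal_rpow_of_nonneg (mul_nonneg (hlam a) ENNReal.toReal_nonneg) zero_le_two,
      Real.rpow_two, ENNReal.toReal_ofReal ENNReal.toReal_nonneg, mul_pow]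
  have hL : 0 ≤ LnormSq p lam f := tsum_nonneg fun a => by positivity
  rw [Real.sqrt_eq_rpow, ← ENNReal.ofReal_rpow_of_nonneg hL one_half_pos.le, ← hsq,
    ← ENNReal.rpow_mul]
  norm_num

end Quotient

theorem stmt16 {n : ℕ} (p q : ℝ) (hp1 : 1 < p) (hp2 : p < 2)
    (hq : 1 / p = 1 / 2 + 1 / q)
    (lam : (Fin n → ℤ) → ℝ) (hlam : ∀ a, 0 < lam a)
    (f : (Fin n → ℝ) → ℂ) (hf : MemL p lam f) :
    ∃ g : (Fin n → ℝ) → ℝ, Measurable g ∧ (∀ᵐ x ∂volume, 0 ≤ g x) ∧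
      (∀ a, ENNReal.ofReal (lam a) * pieceNorm q g a ≤ 1) ∧
      (∀ᵐ x ∂volume, g x = 0 → f x = 0) ∧
      eLpNorm (fun x => if g x = 0 then 0 else f x / (g x : ℂ)) 2 volume
        = ENNReal.ofReal (Real.sqrt (LnormSq p lam f)) := by
  have hp : 0 < p := by linarith
  have hq0 : 0 < q := one_div_pos.1 <| by linarith [one_div_lt_one_div_of_lt hp hp2]
  have hr : p / q = 1 - p / 2 := by
    rw [div_eq_mul_one_div, ← sub_eq_of_eq_add' hq]
    field_simp
  have hlam' : ∀ a, 0 ≤ lam a := fun a => (hlam a).le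
  set f' := hf.1.mk f
  have hff' : f =ᵐ[volume] f' := hf.1.ae_eq_mk
  have hf' : MemL p lam f' := hf.ae_eq hff'
  refine ⟨mFactor p (p / q) lam f', measurable_mFactor hf.1.stronglyMeasurable_mk,
    ae_of_all _ (mFactor_nonneg hlam'), fun a => ofReal_mul_pieceNorm_mFactor_le_one hlam'
      hq0.le (div_pos hp hq0) (mul_div_cancel₀ p hq0.ne') (hf'.2.1 a).ne, ?_, ?_⟩
  · filter_upwards [hff', ae_eq_zero_of_mFactor_eq_zero hf'.1 hp (fun a => (hlam a).ne')
      fun a => (hf'.2.1 a).ne] with x hx h0 using hx ▸ h0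
  · rw [LnormSq_congr_ae hff', ← eLpNorm_div_mFactor hf' hlam' (div_pos hp hq0).le
      (by linarith) (by linarith)]
    -- the `if` is redundant since `f x / 0 = 0`
    refine eLpNorm_congr_ae ?_
    filter_upwards [hff'] with x hx
    split_ifs with h0 <;> simp [h0, hx]

end
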